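/- arXiv:2206.08805 — 3 statements merged into one kernel-verified Lean document; each statement's English description precedes it below -/
import Mathlib

section
/- Let (G = (V,E), c1, c2) be an MSp instance. For every non-dominated value vector y ∈ Y_N there exists a spanner S of G with f(S) = y such that every edge e ∈ E with c1(e) = 0 belongs to S. -/
namespace MSpPaper

open SimpleGraph

variable {V : Type*}

/-- Minimum total `c2`-weight of a walk from `u` to `v` using only edges in `F`
(the set of weights of such walks is a set of naturals; its infimum is `0` when no walk exists). -/
noncomputable def wdist (F : Set (Sym2 V)) (c2 : Sym2 V → ℕ) (u v : V) : ℕ :=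
  sInf (Set.range fun p : (SimpleGraph.fromEdgeSet F).Walk u v => (p.edges.map c2).sum)

/-- `S` is a spanner of `G`: a subset of the edges such that the resulting subgraph is connected. -/
def IsSpanner (G : SimpleGraph V) (S : Set (Sym2 V)) : Prop :=
  S ⊆ G.edgeSet ∧ (SimpleGraph.fromEdgeSet S).Connected

/-- First objective: total `c1`-cost of the spanner. -/
def f1 (c1 : Sym2 V → ℤ) (S : Finset (Sym2 V)) : ℤ := ∑ e ∈ S, c1 e

open scoped Classical in
/-- Second objective (stretch factor): maximum over pairs of distinct vertices of the
distance ratio `d^S(u,v)/d^E(u,v)` (junk value `0` if there is no pair of distinct vertices). -/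
noncomputable def f2 [Fintype V] (E S : Set (Sym2 V)) (c2 : Sym2 V → ℕ) : ℚ :=
  if h : ((Finset.univ : Finset (V × V)).filter fun p => p.1 ≠ p.2).Nonempty then
    ((Finset.univ : Finset (V × V)).filter fun p => p.1 ≠ p.2).sup' h
      (fun p => (wdist S c2 p.1 p.2 : ℚ) / (wdist E c2 p.1 p.2 : ℚ))
  else 0

/-- The value vector of a spanner. -/
noncomputable def valueVec [Fintype V] (G : SimpleGraph V) (c1 : Sym2 V → ℤ) (c2 : Sym2 V → ℕ)
    (S : Finset (Sym2 V)) : ℚ × ℚ :=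
  ((f1 c1 S : ℚ), f2 G.edgeSet (↑S) c2)

/-- `y'` dominates `y`: componentwise `≤` and unequal. -/
def Dominates (y' y : ℚ × ℚ) : Prop := y' ≤ y ∧ y' ≠ y

/-- The non-dominated set of an MSp instance. -/
def YN [Fintype V] (G : SimpleGraph V) (c1 : Sym2 V → ℤ) (c2 : Sym2 V → ℕ) : Set (ℚ × ℚ) :=
  {y | (∃ S : Finset (Sym2 V), IsSpanner G (↑S) ∧ valueVec G c1 c2 S = y) ∧
       ∀ S' : Finset (Sym2 V), IsSpanner G (↑S') → ¬ Dominates (valueVec G c1 c2 S') y}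


lemma wdist_anti {F F' : Set (Sym2 V)} (h : F ⊆ F') (c2 : Sym2 V → ℕ) (u v : V)
    (hne : Nonempty ((SimpleGraph.fromEdgeSet F).Walk u v)) :
    wdist F' c2 u v ≤ wdist F c2 u v := by
  have hA : (Set.range fun p : (SimpleGraph.fromEdgeSet F).Walk u v =>
      (p.edges.map c2).sum).Nonempty := Set.range_nonempty _
  obtain ⟨p, hp⟩ := Nat.sInf_mem hA
  have hp' : ∀ e ∈ p.edges, e ∈ (SimpleGraph.fromEdgeSet F').edgeSet := fun e he =>
    SimpleGraph.edgeSet_mono (SimpleGraph.fromEdgeSet_mono h) (p.edges_subset_edgeSet he)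
  have hle : wdist F' c2 u v ≤ ((p.transfer _ hp').edges.map c2).sum :=
    Nat.sInf_le ⟨p.transfer _ hp', rfl⟩
  rw [SimpleGraph.Walk.edges_transfer] at hle
  exact hle.trans hp.le

lemma f2_anti [Fintype V] {E S S' : Set (Sym2 V)} (h : S ⊆ S') (c2 : Sym2 V → ℕ)
    (hconn : (SimpleGraph.fromEdgeSet S).Connected) :
    f2 E S' c2 ≤ f2 E S c2 := by
  classical
  unfold f2
  split
  · apply Finset.sup'_mono_fun
    intro p _
    have hw : wdist S' c2 p.1 p.2 ≤ wdist S c2 p.1 p.2 :=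
      wdist_anti h c2 p.1 p.2 (hconn.preconnected p.1 p.2)
    exact div_le_div_of_nonneg_right (by exact_mod_cast hw) (Nat.cast_nonneg _)
  · exact le_refl _

/-- For every non-dominated value vector `y` of an MSp instance there is a
spanner `S` attaining `y` that contains every edge of zero `c1`-cost. -/
theorem exists_spanner_with_zero_cost_edges {V : Type*} [Fintype V] (G : SimpleGraph V)
    (hG : G.Connected) (c1 : Sym2 V → ℤ) (c2 : Sym2 V → ℕ)
    (hc2 : ∀ e ∈ G.edgeSet, 0 < c2 e)
    (y : ℚ × ℚ) (hy : y ∈ YN G c1 c2) :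
    ∃ S : Finset (Sym2 V), IsSpanner G (↑S) ∧ valueVec G c1 c2 S = y ∧
      ∀ e ∈ G.edgeSet, c1 e = 0 → e ∈ S := by
  classical
  obtain ⟨⟨S, hS, hSy⟩, hND⟩ := hy
  set Z : Finset (Sym2 V) :=
    Finset.univ.filter (fun e : Sym2 V => e ∈ G.edgeSet ∧ c1 e = 0) with hZ
  set T : Finset (Sym2 V) := S ∪ Z with hT
  have hTsub : (↑T : Set (Sym2 V)) ⊆ G.edgeSet := by
    intro e he
    rcases Finset.mem_union.mp he with h | h
    · exact hS.1 h
    · exact (Finset.mem_filter.mp h).2.1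
  have hST : (↑S : Set (Sym2 V)) ⊆ (↑T : Set (Sym2 V)) := by
    intro e he; exact Finset.mem_union_left _ he
  have hTconn : (SimpleGraph.fromEdgeSet (↑T : Set (Sym2 V))).Connected :=
    hS.2.mono (SimpleGraph.fromEdgeSet_mono hST)
  have hTspan : IsSpanner G (↑T) := ⟨hTsub, hTconn⟩
  have hf1 : f1 c1 T = f1 c1 S := by
    refine (Finset.sum_subset Finset.subset_union_left ?_).symm
    intro e he hne
    rcases Finset.mem_union.mp he with h | h
    · exact absurd h hne
    · exact (Finset.mem_filter.mp h).2.2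
  have hf2 : f2 G.edgeSet (↑T) c2 ≤ f2 G.edgeSet (↑S) c2 := f2_anti hST c2 hS.2
  have hle : valueVec G c1 c2 T ≤ y := by
    rw [← hSy]
    constructor
    · simp [valueVec, hf1]
    · simpa [valueVec] using hf2
  have heq : valueVec G c1 c2 T = y := by
    by_contra hne
    exact hND T hTspan ⟨hle, hne⟩
  refine ⟨T, hTspan, heq, ?_⟩
  intro e heE hc1
  exact Finset.mem_union_right _ (Finset.mem_filter.mpr ⟨Finset.mem_univ _, heE, hc1⟩)

end MSpPaper
end

section
/- For every integer n ≥ 2 and every spanner S ∈ X of the graph G_n, the stretch factor satisfies f2(S) = d^S_{c2}(s,t)/d^E_{c2}(s,t) = d^S_{c2}(s,t); that is, the maximum distance ratio over all vertex pairs is attained at the pair (s,t), and d^E_{c2}(s,t) = 1. -/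
namespace MSpPaper

open SimpleGraph

variable {V : Type*}

/-! ### Auxiliary lemmas -/

section Generic
variable (F : Set (Sym2 V)) (c : Sym2 V → ℕ)

lemma wdist_le_walk {u v : V} (p : (SimpleGraph.fromEdgeSet F).Walk u v) :
    wdist F c u v ≤ (p.edges.map c).sum := Nat.sInf_le ⟨p, rfl⟩

lemma exists_walk_wdist {u v : V} (h : (SimpleGraph.fromEdgeSet F).Reachable u v) :
    ∃ p : (SimpleGraph.fromEdgeSet F).Walk u v, (p.edges.map c).sum = wdist F c u v := by
  have hne : (Set.range fun p : (SimpleGraph.fromEdgeSet F).Walk u v =>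
      (p.edges.map c).sum).Nonempty := by
    obtain ⟨p⟩ := h; exact ⟨_, ⟨p, rfl⟩⟩
  exact Nat.sInf_mem hne

lemma wdist_triangle {u v w : V} (h1 : (SimpleGraph.fromEdgeSet F).Reachable u v)
    (h2 : (SimpleGraph.fromEdgeSet F).Reachable v w) :
    wdist F c u w ≤ wdist F c u v + wdist F c v w := by
  obtain ⟨p, hp⟩ := exists_walk_wdist F c h1
  obtain ⟨q, hq⟩ := exists_walk_wdist F c h2
  calc wdist F c u w ≤ ((p.append q).edges.map c).sum := wdist_le_walk F c _
  _ = wdist F c u v + wdist F c v w := by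
      rw [SimpleGraph.Walk.edges_append, List.map_append, List.sum_append, hp, hq]

lemma wdist_comm (u v : V) : wdist F c u v = wdist F c v u := by
  unfold wdist
  congr 1
  ext x
  constructor
  · rintro ⟨p, rfl⟩
    exact ⟨p.reverse, by simp [List.sum_reverse]⟩
  · rintro ⟨p, rfl⟩
    exact ⟨p.reverse, by simp [List.sum_reverse]⟩

lemma wdist_self (u : V) : wdist F c u u = 0 :=
  Nat.le_antisymm (wdist_le_walk F c SimpleGraph.Walk.nil) (Nat.zero_le _)

lemma walk_weight_lower (φ : V → ℤ)
    (hφ : ∀ a b, (SimpleGraph.fromEdgeSet F).Adj a b → (φ a - φ b).natAbs ≤ c s(a, b))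
    {u v : V} (p : (SimpleGraph.fromEdgeSet F).Walk u v) :
    (φ u - φ v).natAbs ≤ (p.edges.map c).sum := by
  induction p with
  | nil => simp
  | @cons a b d h q ih =>
    have tri : (φ a - φ d).natAbs ≤ (φ a - φ b).natAbs + (φ b - φ d).natAbs := by
      have := Int.natAbs_add_le (φ a - φ b) (φ b - φ d)
      rwa [sub_add_sub_cancel] at this
    calc (φ a - φ d).natAbs ≤ (φ a - φ b).natAbs + (φ b - φ d).natAbs := tri
    _ ≤ c s(a, b) + (q.edges.map c).sum := add_le_add (hφ _ _ h) ih
    _ = ((Walk.cons h q).edges.map c).sum := by simp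

lemma wdist_lower (φ : V → ℤ)
    (hφ : ∀ a b, (SimpleGraph.fromEdgeSet F).Adj a b → (φ a - φ b).natAbs ≤ c s(a, b))
    {u v : V} (h : (SimpleGraph.fromEdgeSet F).Reachable u v) :
    (φ u - φ v).natAbs ≤ wdist F c u v := by
  obtain ⟨p, hp⟩ := exists_walk_wdist F c h
  rw [← hp]
  exact walk_weight_lower F c φ hφ p

lemma one_le_wdist (hpos : ∀ e ∈ F, 1 ≤ c e) {u v : V} (hne : u ≠ v)
    (h : (SimpleGraph.fromEdgeSet F).Reachable u v) :
    1 ≤ wdist F c u v := by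
  obtain ⟨p, hp⟩ := exists_walk_wdist F c h
  rw [← hp]
  cases p with
  | nil => exact absurd rfl hne
  | @cons a b d h q =>
    have h1 : s(u, b) ∈ F := ((SimpleGraph.fromEdgeSet_adj _).mp h).1
    have := hpos _ h1
    simp only [Walk.edges_cons, List.map_cons, List.sum_cons]
    omega

end Generic


/-! ### The family of instances `G_n` from Section 3 -/

/-- Vertices of `G_n`: for each `i`, the vertex `(i,0)` is `v_i`, `(i,1)` is `v_i'`,
and `(i,2)` is `w_i`. -/
abbrev Vtx (n : ℕ) := Fin n × Fin 3

/-- The weights `(c1, c2)` of the (ordered) pair `a b` of vertices of `G_n`;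
`(0, 0)` (in particular `c2 = 0`) marks non-edges. -/
def wtG (n : ℕ) (a b : Vtx n) : ℤ × ℕ :=
  if a.2 = 0 ∧ b.2 = 2 ∧ a.1 = b.1 then (2 ^ ((a.1 : ℕ) + 1), 2 ^ ((a.1 : ℕ) + 1))
  else if a.2 = 0 ∧ b.2 = 1 ∧ a.1 = b.1 then (0, 2 ^ ((a.1 : ℕ) + 1))
  else if a.2 = 1 ∧ b.2 = 2 ∧ a.1 = b.1 then (0, 2 ^ ((a.1 : ℕ) + 1))
  else if a.2 = 2 ∧ b.2 = 0 ∧ (b.1 : ℕ) = (a.1 : ℕ) + 1 then (0, 1)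
  else if a.2 = 0 ∧ b.2 = 2 ∧ (a.1 : ℕ) = 0 ∧ (b.1 : ℕ) = n - 1 then (2 ^ (n + 1), 1)
  else (0, 0)

/-- The cost function `c1` of `G_n`. -/
def c1G (n : ℕ) : Sym2 (Vtx n) → ℤ :=
  Sym2.lift ⟨fun a b => (wtG n a b).1 + (wtG n b a).1, fun _ _ => add_comm _ _⟩

/-- The length function `c2` of `G_n`. -/
def c2G (n : ℕ) : Sym2 (Vtx n) → ℕ :=
  Sym2.lift ⟨fun a b => (wtG n a b).2 + (wtG n b a).2, fun _ _ => add_comm _ _⟩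

/-- The edge set of `G_n`: exactly the pairs with positive length. -/
def EG (n : ℕ) : Set (Sym2 (Vtx n)) := {e | c2G n e ≠ 0}

/-- The graph `G_n`. -/
def Gn (n : ℕ) : SimpleGraph (Vtx n) := SimpleGraph.fromEdgeSet (EG n)

/-- The vertex `v_i`. -/
def vG (n : ℕ) (i : Fin n) : Vtx n := (i, 0)
/-- The vertex `v_i'`. -/
def pG (n : ℕ) (i : Fin n) : Vtx n := (i, 1)
/-- The vertex `w_i`. -/
def wG (n : ℕ) (i : Fin n) : Vtx n := (i, 2)
/-- The vertex `s = v_1`. -/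
def sG (n : ℕ) (hn : 0 < n) : Vtx n := (⟨0, hn⟩, 0)
/-- The vertex `t = w_n`. -/
def tG (n : ℕ) (hn : 0 < n) : Vtx n := (⟨n - 1, Nat.sub_lt hn one_pos⟩, 2)

/-- Membership in `X`: spanners of `G_n` containing every edge of zero `c1`-cost and
not containing the edge `{s, t}`. -/
def memX (n : ℕ) (hn : 0 < n) (S : Finset (Sym2 (Vtx n))) : Prop :=
  IsSpanner (Gn n) (↑S) ∧ (∀ e ∈ (Gn n).edgeSet, c1G n e = 0 → e ∈ S) ∧
    s(sG n hn, tG n hn) ∉ S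

section InstAux

/-- Effective cost of crossing gadget `k`. -/
def Mfun (n : ℕ) (S : Finset (Sym2 (Vtx n))) (k : ℕ) : ℕ :=
  if h : k < n then (if s(((⟨k, h⟩ : Fin n), 0), ((⟨k, h⟩ : Fin n), 2)) ∈ S
    then 2 ^ (k + 1) else 2 ^ (k + 2)) else 0

/-- Potential function for the lower bound. -/
def phiN (n : ℕ) (S : Finset (Sym2 (Vtx n))) (x : Vtx n) : ℕ :=
  (∑ k ∈ Finset.range (x.1 : ℕ), (Mfun n S k + 1)) +
    (if x.2 = 0 then 0 else if x.2 = 1 then 2 ^ ((x.1 : ℕ) + 1) else Mfun n S (x.1 : ℕ))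

/-- The common bound. -/
def Tval (n : ℕ) (S : Finset (Sym2 (Vtx n))) : ℕ :=
  (∑ k ∈ Finset.range n, Mfun n S k) + (n - 1)

variable {n : ℕ} {S : Finset (Sym2 (Vtx n))}

lemma Mfun_lb {k : ℕ} (hk : k < n) : 2 ^ (k + 1) ≤ Mfun n S k := by
  rw [Mfun, dif_pos hk]
  split
  · exact le_rfl
  · exact Nat.pow_le_pow_right (by norm_num) (by omega)

lemma Mfun_ub {k : ℕ} : Mfun n S k ≤ 2 ^ (k + 2) := by
  rw [Mfun]
  split
  · split
    · exact Nat.pow_le_pow_right (by norm_num) (by omega)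
    · exact le_rfl
  · positivity

lemma c2G_mk (a b : Vtx n) : c2G n s(a, b) = (wtG n a b).2 + (wtG n b a).2 := rfl

lemma c1G_mk (a b : Vtx n) : c1G n s(a, b) = (wtG n a b).1 + (wtG n b a).1 := rfl

lemma wt_vw (i : Fin n) : wtG n (i, 0) (i, 2) = (2 ^ ((i:ℕ)+1), 2 ^ ((i:ℕ)+1)) := by
  simp [wtG]
lemma wt_wv (i : Fin n) : wtG n (i, 2) (i, 0) = (0, 0) := by
  simp [wtG]
lemma wt_vp (i : Fin n) : wtG n (i, 0) (i, 1) = (0, 2 ^ ((i:ℕ)+1)) := by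
  simp [wtG]
lemma wt_pv (i : Fin n) : wtG n (i, 1) (i, 0) = (0, 0) := by
  simp [wtG]
lemma wt_pw (i : Fin n) : wtG n (i, 1) (i, 2) = (0, 2 ^ ((i:ℕ)+1)) := by
  simp [wtG]
lemma wt_wp (i : Fin n) : wtG n (i, 2) (i, 1) = (0, 0) := by
  simp [wtG]
lemma wt_conn (i j : Fin n) (h : (j:ℕ) = (i:ℕ)+1) : wtG n (i, 2) (j, 0) = (0, 1) := by
  simp [wtG, h]
lemma wt_conn' (i j : Fin n) (h : (j:ℕ) = (i:ℕ)+1) : wtG n (j, 0) (i, 2) = (0, 0) := by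
  have h1 : j ≠ i := by intro hq; subst hq; omega
  have h2 : ¬((j:ℕ) = 0) := by omega
  simp [wtG, h1, h2]
lemma wt_st (hn : 2 ≤ n) (i j : Fin n) (hi : (i:ℕ) = 0) (hj : (j:ℕ) = n - 1) :
    wtG n (i, 0) (j, 2) = (2 ^ (n+1), 1) := by
  have h1 : i ≠ j := by intro hq; subst hq; omega
  simp [wtG, hi, hj, h1]
lemma wt_ts (i j : Fin n) (hi : (i:ℕ) = 0) (hj : (j:ℕ) = n - 1) :
    wtG n (j, 2) (i, 0) = (0, 0) := by
  simp [wtG, hi, hj]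

lemma c2_vw (i : Fin n) : c2G n s(((i, 0) : Vtx n), (i, 2)) = 2 ^ ((i:ℕ)+1) := by
  rw [c2G_mk, wt_vw, wt_wv]
  rfl
lemma c2_vp (i : Fin n) : c2G n s(((i, 0) : Vtx n), (i, 1)) = 2 ^ ((i:ℕ)+1) := by
  rw [c2G_mk, wt_vp, wt_pv]
  rfl
lemma c2_pw (i : Fin n) : c2G n s(((i, 1) : Vtx n), (i, 2)) = 2 ^ ((i:ℕ)+1) := by
  rw [c2G_mk, wt_pw, wt_wp]
  rfl
lemma c2_conn (i j : Fin n) (h : (j:ℕ) = (i:ℕ)+1) : c2G n s(((i, 2) : Vtx n), (j, 0)) = 1 := by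
  rw [c2G_mk, wt_conn i j h, wt_conn' i j h]
  rfl
lemma c2_st (hn : 2 ≤ n) (i j : Fin n) (hi : (i:ℕ) = 0) (hj : (j:ℕ) = n - 1) :
    c2G n s(((i, 0) : Vtx n), (j, 2)) = 1 := by
  rw [c2G_mk, wt_st hn i j hi hj, wt_ts i j hi hj]
  rfl

lemma mem_edgeSet_iff (e : Sym2 (Vtx n)) :
    e ∈ (Gn n).edgeSet ↔ c2G n e ≠ 0 ∧ ¬ e.IsDiag := by
  rw [Gn, edgeSet_fromEdgeSet]
  rfl

end InstAux


section InstMain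

variable {n : ℕ} {S : Finset (Sym2 (Vtx n))}

lemma mem_S_vp (hn : 0 < n) (hS : memX n hn S) (i : Fin n) :
    s(((i, 0) : Vtx n), (i, 1)) ∈ S := by
  apply hS.2.1
  · rw [mem_edgeSet_iff]
    refine ⟨by rw [c2_vp]; positivity, by simp⟩
  · rw [c1G_mk, wt_vp, wt_pv]
    rfl

lemma mem_S_pw (hn : 0 < n) (hS : memX n hn S) (i : Fin n) :
    s(((i, 1) : Vtx n), (i, 2)) ∈ S := by
  apply hS.2.1
  · rw [mem_edgeSet_iff]
    refine ⟨by rw [c2_pw]; positivity, by simp⟩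
  · rw [c1G_mk, wt_pw, wt_wp]
    rfl

lemma mem_S_conn (hn : 0 < n) (hS : memX n hn S) (i j : Fin n) (h : (j:ℕ) = (i:ℕ)+1) :
    s(((i, 2) : Vtx n), (j, 0)) ∈ S := by
  apply hS.2.1
  · rw [mem_edgeSet_iff]
    refine ⟨by rw [c2_conn i j h]; omega, by simp⟩
  · rw [c1G_mk, wt_conn i j h, wt_conn' i j h]
    rfl

lemma wdist_le_adj {a b : Vtx n} (hmem : s(a, b) ∈ S) (hne : a ≠ b) :
    wdist (↑S) (c2G n) a b ≤ c2G n s(a, b) := by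
  have hadj : (SimpleGraph.fromEdgeSet (↑S : Set (Sym2 (Vtx n)))).Adj a b :=
    (SimpleGraph.fromEdgeSet_adj _).mpr ⟨hmem, hne⟩
  simpa using wdist_le_walk (↑S) (c2G n) (SimpleGraph.Walk.cons hadj SimpleGraph.Walk.nil)

lemma wdist_vw_le (hn : 0 < n) (hS : memX n hn S) (i : Fin n) :
    wdist (↑S) (c2G n) (i, 0) (i, 2) ≤ Mfun n S (i:ℕ) := by
  by_cases hm : s(((i, 0) : Vtx n), (i, 2)) ∈ S
  · have hM : Mfun n S (i:ℕ) = 2 ^ ((i:ℕ)+1) := by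
      rw [Mfun, dif_pos i.isLt, if_pos (by simpa using hm)]
    rw [hM, ← c2_vw i]
    exact wdist_le_adj hm (by simp)
  · have hM : Mfun n S (i:ℕ) = 2 ^ ((i:ℕ)+2) := by
      rw [Mfun, dif_pos i.isLt, if_neg (by simpa using hm)]
    have h1 := mem_S_vp hn hS i
    have h2 := mem_S_pw hn hS i
    have hadj1 : (SimpleGraph.fromEdgeSet (↑S : Set (Sym2 (Vtx n)))).Adj (i, 0) (i, 1) :=
      (SimpleGraph.fromEdgeSet_adj _).mpr ⟨h1, by simp⟩
    have hadj2 : (SimpleGraph.fromEdgeSet (↑S : Set (Sym2 (Vtx n)))).Adj (i, 1) (i, 2) :=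
      (SimpleGraph.fromEdgeSet_adj _).mpr ⟨h2, by simp⟩
    have := wdist_le_walk (↑S) (c2G n)
      (SimpleGraph.Walk.cons hadj1 (SimpleGraph.Walk.cons hadj2 SimpleGraph.Walk.nil))
    simp only [SimpleGraph.Walk.edges_cons, SimpleGraph.Walk.edges_nil, List.map_cons,
      List.map_nil, List.sum_cons, List.sum_nil, c2_vp, c2_pw] at this
    have hpow : 2 ^ ((i:ℕ)+2) = 2 ^ ((i:ℕ)+1) + 2 ^ ((i:ℕ)+1) := by ring
    rw [hM, hpow]
    omega

lemma gadget_ub (hn : 0 < n) (hS : memX n hn S) (i : Fin n) (r r' : Fin 3) :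
    wdist (↑S) (c2G n) (i, r) (i, r') ≤ Mfun n S (i:ℕ) := by
  have h02 := wdist_vw_le hn hS i
  have h01 : wdist (↑S) (c2G n) (i, 0) (i, 1) ≤ 2 ^ ((i:ℕ)+1) := by
    have := wdist_le_adj (mem_S_vp hn hS i) (by simp : ((i, 0) : Vtx n) ≠ (i, 1))
    rwa [c2_vp] at this
  have h12 : wdist (↑S) (c2G n) (i, 1) (i, 2) ≤ 2 ^ ((i:ℕ)+1) := by
    have := wdist_le_adj (mem_S_pw hn hS i) (by simp : ((i, 1) : Vtx n) ≠ (i, 2))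
    rwa [c2_pw] at this
  have hlb : 2 ^ ((i:ℕ)+1) ≤ Mfun n S (i:ℕ) := Mfun_lb i.isLt
  have h3 : ∀ r : Fin 3, r = 0 ∨ r = 1 ∨ r = 2 := by decide
  rcases h3 r with rfl | rfl | rfl <;> rcases h3 r' with rfl | rfl | rfl
  · rw [wdist_self]; exact Nat.zero_le _
  · exact h01.trans hlb
  · exact h02
  · rw [wdist_comm]; exact h01.trans hlb
  · rw [wdist_self]; exact Nat.zero_le _
  · exact h12.trans hlb
  · rw [wdist_comm]; exact h02
  · rw [wdist_comm]; exact h12.trans hlb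
  · rw [wdist_self]; exact Nat.zero_le _

lemma wdist_conn_le (hn : 0 < n) (hS : memX n hn S) (i j : Fin n) (h : (j:ℕ) = (i:ℕ)+1) :
    wdist (↑S) (c2G n) (i, 2) (j, 0) ≤ 1 := by
  have := wdist_le_adj (mem_S_conn hn hS i j h) (by
    intro hq
    rw [Prod.ext_iff] at hq
    simpa using hq.2)
  rwa [c2_conn i j h] at this

lemma chain_ub (hn : 0 < n) (hS : memX n hn S) :
    ∀ (d i : ℕ) (hi : i < n) (hj : i + 1 + d < n),
      wdist (↑S) (c2G n) ((⟨i, hi⟩ : Fin n), 2) ((⟨i+1+d, hj⟩ : Fin n), 0) ≤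
        (∑ k ∈ Finset.Ico (i+1) (i+1+d), (Mfun n S k + 1)) + 1 := by
  intro d
  induction d with
  | zero =>
    intro i hi hj
    have := wdist_conn_le hn hS (⟨i, hi⟩ : Fin n) (⟨i+1+0, hj⟩ : Fin n) (by simp)
    simpa using this
  | succ d ih =>
    intro i hi hj
    have hj' : i + 1 + d < n := by omega
    set A : Vtx n := ((⟨i, hi⟩ : Fin n), 2)
    set B : Vtx n := ((⟨i+1+d, hj'⟩ : Fin n), 0)
    set C : Vtx n := ((⟨i+1+d, hj'⟩ : Fin n), 2)
    set D : Vtx n := ((⟨i+1+(d+1), hj⟩ : Fin n), 0)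
    have hreach : ∀ u v : Vtx n, (SimpleGraph.fromEdgeSet (↑S : Set (Sym2 (Vtx n)))).Reachable u v :=
      fun u v => hS.1.2.preconnected u v
    have t1 : wdist (↑S) (c2G n) A D ≤ wdist (↑S) (c2G n) A B + wdist (↑S) (c2G n) B D :=
      wdist_triangle _ _ (hreach A B) (hreach B D)
    have t2 : wdist (↑S) (c2G n) B D ≤ wdist (↑S) (c2G n) B C + wdist (↑S) (c2G n) C D :=
      wdist_triangle _ _ (hreach B C) (hreach C D)
    have b1 := ih i hi hj'
    have b2 : wdist (↑S) (c2G n) B C ≤ Mfun n S (i+1+d) := by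
      have := gadget_ub hn hS (⟨i+1+d, hj'⟩ : Fin n) 0 2
      simpa using this
    have b3 : wdist (↑S) (c2G n) C D ≤ 1 := by
      exact wdist_conn_le hn hS _ _ (by simp; omega)
    have hsum : (∑ k ∈ Finset.Ico (i+1) (i+1+(d+1)), (Mfun n S k + 1))
        = (∑ k ∈ Finset.Ico (i+1) (i+1+d), (Mfun n S k + 1)) + (Mfun n S (i+1+d) + 1) := by
      have : i+1+(d+1) = (i+1+d)+1 := by omega
      rw [this, Finset.sum_Ico_succ_top (by omega)]
    rw [hsum]
    have : wdist (↑S) (c2G n) A B ≤ (∑ k ∈ Finset.Ico (i+1) (i+1+d), (Mfun n S k + 1)) + 1 := b1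
    linarith

end InstMain


section PairUB

variable {n : ℕ} {S : Finset (Sym2 (Vtx n))}

lemma Mfun_le_Tval (hn : 0 < n) {k : ℕ} (hk : k < n) : Mfun n S k ≤ Tval n S := by
  have h1 : Mfun n S k ≤ ∑ j ∈ Finset.range n, Mfun n S j :=
    Finset.single_le_sum (f := Mfun n S) (fun _ _ => Nat.zero_le _) (Finset.mem_range.mpr hk)
  rw [Tval]
  omega

lemma pair_ub (hn : 0 < n) (hS : memX n hn S) (u v : Vtx n) :
    wdist (↑S) (c2G n) u v ≤ Tval n S := by
  have hreach : ∀ u v : Vtx n, (SimpleGraph.fromEdgeSet (↑S : Set (Sym2 (Vtx n)))).Reachable u v :=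
    fun u v => hS.1.2.preconnected u v
  suffices aux : ∀ u v : Vtx n, (u.1:ℕ) ≤ (v.1:ℕ) → wdist (↑S) (c2G n) u v ≤ Tval n S by
    rcases le_total ((u.1:ℕ)) ((v.1:ℕ)) with h | h
    · exact aux u v h
    · rw [wdist_comm]; exact aux v u h
  clear u v
  intro u v huv
  obtain ⟨iu, ru⟩ := u
  obtain ⟨iv, rv⟩ := v
  simp only at huv
  rcases eq_or_lt_of_le huv with heq | hlt
  · have hiu : iu = iv := Fin.ext heq
    subst hiu
    exact (gadget_ub hn hS iu ru rv).trans (Mfun_le_Tval hn iu.isLt)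
  · have hiun := iu.isLt
    have hivn := iv.isLt
    set d : ℕ := (iv:ℕ) - (iu:ℕ) - 1 with hd
    have hiv' : (iu:ℕ) + 1 + d < n := by omega
    have hch := chain_ub hn hS d (iu:ℕ) iu.isLt hiv'
    have e1 : (⟨(iu:ℕ), iu.isLt⟩ : Fin n) = iu := rfl
    have e2 : (⟨(iu:ℕ)+1+d, hiv'⟩ : Fin n) = iv := Fin.ext (by simp; omega)
    rw [e1, e2] at hch
    have hWi : wdist (↑S) (c2G n) (iu, ru) (iu, 2) ≤ Mfun n S (iu:ℕ) := gadget_ub hn hS iu ru 2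
    have hVj : wdist (↑S) (c2G n) (iv, 0) (iv, rv) ≤ Mfun n S (iv:ℕ) := gadget_ub hn hS iv 0 rv
    have t1 : wdist (↑S) (c2G n) (iu, ru) (iv, rv) ≤
        wdist (↑S) (c2G n) (iu, ru) (iu, 2) + wdist (↑S) (c2G n) (iu, 2) (iv, rv) :=
      wdist_triangle _ _ (hreach _ _) (hreach _ _)
    have t2 : wdist (↑S) (c2G n) (iu, 2) (iv, rv) ≤
        wdist (↑S) (c2G n) (iu, 2) (iv, 0) + wdist (↑S) (c2G n) (iv, 0) (iv, rv) :=
      wdist_triangle _ _ (hreach _ _) (hreach _ _)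
    -- arithmetic on sums
    have s1 : (∑ k ∈ Finset.Ico ((iu:ℕ)+1) ((iu:ℕ)+1+d), (Mfun n S k + 1))
        = (∑ k ∈ Finset.Ico ((iu:ℕ)+1) ((iu:ℕ)+1+d), Mfun n S k) + d := by
      rw [Finset.sum_add_distrib, Finset.sum_const, Nat.card_Ico, smul_eq_mul, mul_one]
      omega
    have s2 : (∑ k ∈ Finset.Ico ((iu:ℕ)) ((iu:ℕ)+1+d+1), Mfun n S k)
        = Mfun n S (iu:ℕ) + (∑ k ∈ Finset.Ico ((iu:ℕ)+1) ((iu:ℕ)+1+d), Mfun n S k)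
          + Mfun n S ((iu:ℕ)+1+d) := by
      rw [Finset.sum_Ico_succ_top (by omega), Finset.sum_eq_sum_Ico_succ_bot (by omega)]
    have s3 : (∑ k ∈ Finset.Ico ((iu:ℕ)) ((iu:ℕ)+1+d+1), Mfun n S k)
        ≤ ∑ k ∈ Finset.range n, Mfun n S k := by
      rw [Finset.range_eq_Ico]
      exact Finset.sum_le_sum_of_subset (Finset.Ico_subset_Ico (Nat.zero_le _) (by omega))
    have hMiv : Mfun n S ((iu:ℕ)+1+d) = Mfun n S (iv:ℕ) := by
      congr 1
      omega
    rw [hMiv] at s2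
    rw [Tval]
    set nm := n - 1 with hnm
    have hdn : d + 1 ≤ nm := by omega
    set A := ∑ k ∈ Finset.Ico ((iu:ℕ)+1) ((iu:ℕ)+1+d), Mfun n S k with hA
    set R := ∑ k ∈ Finset.range n, Mfun n S k with hR
    rw [s1] at hch
    linarith

end PairUB


section LowerBound

variable {n : ℕ} {S : Finset (Sym2 (Vtx n))}

lemma phiN_v (i : Fin n) : phiN n S (i, 0) = ∑ k ∈ Finset.range (i:ℕ), (Mfun n S k + 1) := by
  simp [phiN]

lemma phiN_p (i : Fin n) :
    phiN n S (i, 1) = (∑ k ∈ Finset.range (i:ℕ), (Mfun n S k + 1)) + 2 ^ ((i:ℕ)+1) := by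
  simp [phiN]

lemma phiN_w (i : Fin n) :
    phiN n S (i, 2) = (∑ k ∈ Finset.range (i:ℕ), (Mfun n S k + 1)) + Mfun n S (i:ℕ) := by
  simp [phiN]

lemma natAbs_cast_sub_le {X Y B : ℕ} (h1 : Y ≤ X + B) (h2 : X ≤ Y + B) :
    ((X:ℤ) - Y).natAbs ≤ B := by omega

lemma lipschitz_aux (hn : 0 < n) (hS : memX n hn S) (a b : Vtx n)
    (hmem : s(a, b) ∈ S) (hw : (wtG n a b).2 ≠ 0) :
    (((phiN n S a : ℤ)) - phiN n S b).natAbs ≤ c2G n s(a, b) := by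
  obtain ⟨ia, ra⟩ := a
  obtain ⟨ib, rb⟩ := b
  rw [wtG] at hw
  simp only [apply_ite Prod.snd] at hw
  split_ifs at hw with h1 h2 h3 h4 h5
  · obtain ⟨hra, hrb, hii⟩ := h1
    subst hra; subst hrb; subst hii
    have hM : Mfun n S (ia:ℕ) = 2 ^ ((ia:ℕ)+1) := by
      rw [Mfun, dif_pos ia.isLt, if_pos (by simpa using hmem)]
    rw [c2_vw, phiN_v, phiN_w, hM]
    generalize (2:ℕ) ^ ((ia:ℕ)+1) = P
    apply natAbs_cast_sub_le <;> omega
  · obtain ⟨hra, hrb, hii⟩ := h2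
    subst hra; subst hrb; subst hii
    rw [c2_vp, phiN_v, phiN_p]
    generalize (2:ℕ) ^ ((ia:ℕ)+1) = P
    apply natAbs_cast_sub_le <;> omega
  · obtain ⟨hra, hrb, hii⟩ := h3
    subst hra; subst hrb; subst hii
    have hlb : 2 ^ ((ia:ℕ)+1) ≤ Mfun n S (ia:ℕ) := Mfun_lb ia.isLt
    have hub : Mfun n S (ia:ℕ) ≤ 2 ^ ((ia:ℕ)+2) := Mfun_ub
    have hpow : 2 ^ ((ia:ℕ)+2) = 2 ^ ((ia:ℕ)+1) + 2 ^ ((ia:ℕ)+1) := by ring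
    rw [c2_pw, phiN_p, phiN_w]
    rw [hpow] at hub
    clear hpow hw
    generalize (2:ℕ) ^ ((ia:ℕ)+1) = P at hlb hub ⊢
    apply natAbs_cast_sub_le <;> omega
  · obtain ⟨hra, hrb, hii⟩ := h4
    subst hra; subst hrb
    rw [c2_conn ia ib hii, phiN_w, phiN_v, hii, Finset.sum_range_succ]
    apply natAbs_cast_sub_le <;> omega
  · obtain ⟨hra, hrb, hia, hib⟩ := h5
    subst hra; subst hrb
    exfalso
    apply hS.2.2
    have e1 : ia = (⟨0, hn⟩ : Fin n) := Fin.ext (by simpa using hia)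
    have e2 : ib = (⟨n - 1, Nat.sub_lt hn one_pos⟩ : Fin n) := Fin.ext (by simpa using hib)
    rw [sG, tG, ← e1, ← e2]
    exact hmem
  · exact absurd rfl hw

lemma lipschitz (hn : 0 < n) (hS : memX n hn S) (a b : Vtx n)
    (hadj : (SimpleGraph.fromEdgeSet (↑S : Set (Sym2 (Vtx n)))).Adj a b) :
    (((phiN n S a : ℤ)) - phiN n S b).natAbs ≤ c2G n s(a, b) := by
  have hmem : s(a, b) ∈ S := by
    have := ((SimpleGraph.fromEdgeSet_adj _).mp hadj).1
    simpa using this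
  have hE : s(a, b) ∈ (Gn n).edgeSet := hS.1.1 (by simpa using hmem)
  have hc2 : c2G n s(a, b) ≠ 0 := ((mem_edgeSet_iff _).mp hE).1
  rw [c2G_mk] at hc2
  by_cases hw : (wtG n a b).2 ≠ 0
  · exact lipschitz_aux hn hS a b hmem hw
  · have hw' : (wtG n b a).2 ≠ 0 := by omega
    have hmem' : s(b, a) ∈ S := by rwa [Sym2.eq_swap]
    have := lipschitz_aux hn hS b a hmem' hw'
    rw [Sym2.eq_swap] at this
    have hcc : c2G n s(a, b) = c2G n s(b, a) := by rw [Sym2.eq_swap]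
    omega

lemma st_lb (hn : 0 < n) (hS : memX n hn S) :
    Tval n S ≤ wdist (↑S) (c2G n) (sG n hn) (tG n hn) := by
  have hφ := wdist_lower (↑S) (c2G n) (fun x => (phiN n S x : ℤ))
    (lipschitz hn hS) (hS.1.2.preconnected (sG n hn) (tG n hn))
  have hs : phiN n S (sG n hn) = 0 := by rw [sG, phiN_v]; simp
  have ht : phiN n S (tG n hn) = Tval n S := by
    rw [tG, phiN_w, Tval]
    simp only [Fin.val_mk]
    set f := Mfun n S with hf
    have h1 : ∑ k ∈ Finset.range (n-1), (f k + 1) = (∑ k ∈ Finset.range (n-1), f k) + (n-1) := by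
      rw [Finset.sum_add_distrib, Finset.sum_const, Finset.card_range, smul_eq_mul, mul_one]
    have h2 : ∑ k ∈ Finset.range n, f k = (∑ k ∈ Finset.range (n-1), f k) + f (n-1) := by
      conv_lhs => rw [show n = (n-1)+1 by omega]
      rw [Finset.sum_range_succ]
    omega
  simp only [hs, ht] at hφ
  omega

lemma pair_le_st (hn : 0 < n) (hS : memX n hn S) (u v : Vtx n) :
    wdist (↑S) (c2G n) u v ≤ wdist (↑S) (c2G n) (sG n hn) (tG n hn) :=
  (pair_ub hn hS u v).trans (st_lb hn hS)

end LowerBound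


section FinalPieces

variable {n : ℕ} {S : Finset (Sym2 (Vtx n))}

lemma st_mem_edgeSet (hn2 : 2 ≤ n) (hn : 0 < n) :
    s(sG n hn, tG n hn) ∈ (Gn n).edgeSet := by
  rw [mem_edgeSet_iff]
  constructor
  · rw [sG, tG, c2_st hn2 _ _ rfl rfl]
    omega
  · rw [sG, tG]
    simp

lemma wdistE_st (hn2 : 2 ≤ n) (hn : 0 < n) :
    wdist (Gn n).edgeSet (c2G n) (sG n hn) (tG n hn) = 1 := by
  have hne : sG n hn ≠ tG n hn := by
    rw [sG, tG]
    intro h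
    rw [Prod.ext_iff] at h
    simpa using h.2
  have hadj : (SimpleGraph.fromEdgeSet ((Gn n).edgeSet)).Adj (sG n hn) (tG n hn) :=
    (SimpleGraph.fromEdgeSet_adj _).mpr ⟨st_mem_edgeSet hn2 hn, hne⟩
  have hle : wdist (Gn n).edgeSet (c2G n) (sG n hn) (tG n hn) ≤ 1 := by
    have := wdist_le_walk ((Gn n).edgeSet) (c2G n)
      (SimpleGraph.Walk.cons hadj SimpleGraph.Walk.nil)
    simp only [SimpleGraph.Walk.edges_cons, SimpleGraph.Walk.edges_nil, List.map_cons,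
      List.map_nil, List.sum_cons, List.sum_nil, Nat.add_zero] at this
    rw [sG, tG] at this ⊢
    rw [c2_st hn2 _ _ rfl rfl] at this
    exact this
  have hge : 1 ≤ wdist (Gn n).edgeSet (c2G n) (sG n hn) (tG n hn) := by
    apply one_le_wdist
    · intro e he
      exact Nat.one_le_iff_ne_zero.mpr ((mem_edgeSet_iff e).mp he).1
    · exact hne
    · exact ⟨SimpleGraph.Walk.cons hadj SimpleGraph.Walk.nil⟩
  omega

end FinalPieces

/-- For `n ≥ 2` and every spanner `S ∈ X` of `G_n`, the stretch factor is
attained at the pair `(s, t)`: `f2(S) = d^S(s,t)/d^E(s,t) = d^S(s,t)`, and `d^E(s,t) = 1`. -/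
theorem stretch_attained_at_st (n : ℕ) (hn : 2 ≤ n) (S : Finset (Sym2 (Vtx n)))
    (hS : memX n (by omega) S) :
    f2 (Gn n).edgeSet (↑S) (c2G n) =
        (wdist (↑S) (c2G n) (sG n (by omega)) (tG n (by omega)) : ℚ) /
          (wdist (Gn n).edgeSet (c2G n) (sG n (by omega)) (tG n (by omega)) : ℚ) ∧
      f2 (Gn n).edgeSet (↑S) (c2G n) =
        (wdist (↑S) (c2G n) (sG n (by omega)) (tG n (by omega)) : ℚ) ∧
      wdist (Gn n).edgeSet (c2G n) (sG n (by omega)) (tG n (by omega)) = 1 := by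
  classical
  have hn0 : 0 < n := by omega
  have hne_st : sG n hn0 ≠ tG n hn0 := by
    rw [sG, tG]
    intro h
    rw [Prod.ext_iff] at h
    simpa using h.2
  have hS' : memX n hn0 S := hS
  have hE1 : wdist (Gn n).edgeSet (c2G n) (sG n hn0) (tG n hn0) = 1 := wdistE_st hn hn0
  have hpairle : ∀ u v : Vtx n,
      wdist (↑S) (c2G n) u v ≤ wdist (↑S) (c2G n) (sG n hn0) (tG n hn0) :=
    pair_le_st hn0 hS'
  have hmain : f2 (Gn n).edgeSet (↑S) (c2G n)
      = (wdist (↑S) (c2G n) (sG n hn0) (tG n hn0) : ℚ) := by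
    unfold f2
    split
    case isFalse hcon =>
      exfalso
      apply hcon
      refine ⟨(sG n hn0, tG n hn0), ?_⟩
      simp only [Finset.mem_filter]
      exact ⟨Finset.mem_univ _, hne_st⟩
    case isTrue hcon =>
    apply le_antisymm
    · apply Finset.sup'_le
      intro p hp
      rcases eq_or_ne (wdist (Gn n).edgeSet (c2G n) p.1 p.2) 0 with h0 | h0
      · rw [h0]
        rw [Nat.cast_zero, div_zero]
        positivity
      · have h1 : (1:ℚ) ≤ (wdist (Gn n).edgeSet (c2G n) p.1 p.2 : ℚ) := by
          exact_mod_cast Nat.one_le_iff_ne_zero.mpr h0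
        calc (wdist (↑S) (c2G n) p.1 p.2 : ℚ) / (wdist (Gn n).edgeSet (c2G n) p.1 p.2 : ℚ)
            ≤ (wdist (↑S) (c2G n) p.1 p.2 : ℚ) := div_le_self (by positivity) h1
        _ ≤ (wdist (↑S) (c2G n) (sG n hn0) (tG n hn0) : ℚ) := by
            exact_mod_cast hpairle p.1 p.2
    · calc (wdist (↑S) (c2G n) (sG n hn0) (tG n hn0) : ℚ)
          = (wdist (↑S) (c2G n) (sG n hn0) (tG n hn0) : ℚ) /
            (wdist (Gn n).edgeSet (c2G n) (sG n hn0) (tG n hn0) : ℚ) := by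
            rw [hE1]; norm_num
      _ ≤ _ := by
        apply Finset.le_sup' (f := fun p : Vtx n × Vtx n =>
          (wdist (↑S) (c2G n) p.1 p.2 : ℚ) / (wdist (Gn n).edgeSet (c2G n) p.1 p.2 : ℚ))
          (b := (sG n hn0, tG n hn0))
        simp only [Finset.mem_filter]
        exact ⟨Finset.mem_univ _, hne_st⟩
  refine ⟨?_, ?_, ?_⟩
  · rw [hmain, hE1]
    norm_num
  · rw [hmain]
  · exact hE1

end MSpPaper
end

section
/- For every integer n ≥ 2, the non-dominated set Y_N of the MSp instance (G_n, c1, c2) has cardinality at least 2^n. -/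
namespace MSpPaper

open SimpleGraph

variable {V : Type*}

/-!
For `A ⊆ {1, …, n}` let `S_A` consist of the zero-cost edges and the direct edges `{v_i, w_i}`,
`i ∈ A`. Then `f1(S_A) = ∑_{i ∈ A} 2^i`, which determines `A`, and the `s`–`t` distance `σ(A)` in
`S_A` satisfies `f1(S_A) + σ(A) = K` for a constant `K`. Every edge of `G_n` is bridged in `S_A`
by a walk at most `σ(A)` times as long as the edge, so `f2(S_A) ≤ σ(A)`. A spanner `S` containing
`{s, t}` costs more than any `S_A`. Otherwise, with `B` the set of indices of the direct edges of
`S`, `f1(S) ≥ f1(S_B)`, and a potential that grows by at most `c2(e)` along each edge of `S` shows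
`d^S(s, t) ≥ σ(B)`; as `d^E(s, t) = 1`, `f1(S) + f2(S) ≥ K`. Hence no spanner dominates `S_A`.
-/

section WalkWeight

variable {G : SimpleGraph V} {F E S : Set (Sym2 V)} {c2 : Sym2 V → ℕ} {u v : V}

def weight (c2 : Sym2 V → ℕ) (p : G.Walk u v) : ℕ :=
  (p.edges.map c2).sum

@[simp] lemma weight_nil : weight c2 (Walk.nil : G.Walk u u) = 0 := rfl

@[simp] lemma weight_cons {w : V} (h : G.Adj u v) (p : G.Walk v w) :
    weight c2 (Walk.cons h p) = c2 s(u, v) + weight c2 p := by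
  simp [weight]

@[simp] lemma weight_append {w : V} (p : G.Walk u v) (q : G.Walk v w) :
    weight c2 (p.append q) = weight c2 p + weight c2 q := by
  simp [weight]

@[simp] lemma weight_reverse (p : G.Walk u v) : weight c2 p.reverse = weight c2 p := by
  simp [weight, List.sum_reverse]

lemma wdist_le_weight (p : (fromEdgeSet F).Walk u v) : wdist F c2 u v ≤ weight c2 p :=
  Nat.sInf_le ⟨p, rfl⟩

lemma exists_weight_eq_wdist (h : (fromEdgeSet F).Reachable u v) :
    ∃ p : (fromEdgeSet F).Walk u v, weight c2 p = wdist F c2 u v :=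
  Nat.sInf_mem (Set.range_nonempty_iff_nonempty.2 h)

lemma wdist_eq_zero_of_not_reachable (h : ¬ (fromEdgeSet F).Reachable u v) :
    wdist F c2 u v = 0 := by
  have : IsEmpty ((fromEdgeSet F).Walk u v) := not_nonempty_iff.1 h
  rw [wdist, Set.range_eq_empty, Nat.sInf_empty]

lemma wdist_pos (hF : ∀ e ∈ F, c2 e ≠ 0) (h : (fromEdgeSet F).Reachable u v) (huv : u ≠ v) :
    0 < wdist F c2 u v := by
  obtain ⟨p, hp⟩ := exists_weight_eq_wdist (c2 := c2) h
  cases p with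
  | nil => exact absurd rfl huv
  | cons hadj p =>
    have := hF _ ((fromEdgeSet_adj F).1 hadj).1
    rw [← hp, weight_cons]
    omega

lemma le_add_weight_of_potential (φ : V → ℕ)
    (hφ : ∀ a b, s(a, b) ∈ F → φ b ≤ φ a + c2 s(a, b)) (p : (fromEdgeSet F).Walk u v) :
    φ v ≤ φ u + weight c2 p := by
  induction p with
  | nil => simp
  | cons hadj p ih =>
    have := hφ _ _ ((fromEdgeSet_adj F).1 hadj).1
    rw [weight_cons]
    omega

lemma le_add_wdist_of_potential (φ : V → ℕ)
    (hφ : ∀ a b, s(a, b) ∈ F → φ b ≤ φ a + c2 s(a, b)) (h : (fromEdgeSet F).Reachable u v) :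
    φ v ≤ φ u + wdist F c2 u v := by
  obtain ⟨p, hp⟩ := exists_weight_eq_wdist (c2 := c2) h
  exact hp ▸ le_add_weight_of_potential φ hφ p

lemma exists_walk_weight_le_mul (q : ℕ)
    (hE : ∀ e ∈ E, ∃ a b, e = s(a, b) ∧ ∃ p : (fromEdgeSet S).Walk a b, weight c2 p ≤ q * c2 e)
    (p : (fromEdgeSet E).Walk u v) :
    ∃ p' : (fromEdgeSet S).Walk u v, weight c2 p' ≤ q * weight c2 p := by
  induction p with
  | nil => exact ⟨Walk.nil, by simp⟩
  | @cons x y _ hadj p ih =>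
    obtain ⟨p', hp'⟩ := ih
    obtain ⟨a, b, hab, r, hr⟩ := hE _ ((fromEdgeSet_adj E).1 hadj).1
    obtain ⟨r', hr'⟩ : ∃ r' : (fromEdgeSet S).Walk x y, weight c2 r' ≤ q * c2 s(x, y) := by
      rcases Sym2.eq_iff.1 hab with ⟨rfl, rfl⟩ | ⟨rfl, rfl⟩
      · exact ⟨r, hab ▸ hr⟩
      · exact ⟨r.reverse, by rwa [weight_reverse, hab, Sym2.eq_swap]⟩
    refine ⟨r'.append p', ?_⟩
    rw [weight_append, weight_cons, mul_add]
    omega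

lemma f2_le_of_forall_edge [Fintype V] (q : ℕ)
    (hE : ∀ e ∈ E, ∃ a b, e = s(a, b) ∧ ∃ p : (fromEdgeSet S).Walk a b, weight c2 p ≤ q * c2 e) :
    f2 E S c2 ≤ q := by
  unfold f2
  split_ifs
  · refine Finset.sup'_le _ _ fun x _ => ?_
    by_cases hr : (fromEdgeSet E).Reachable x.1 x.2
    · obtain ⟨p, hp⟩ := exists_weight_eq_wdist (c2 := c2) hr
      obtain ⟨p', hp'⟩ := exists_walk_weight_le_mul q hE p
      have : wdist S c2 x.1 x.2 ≤ q * wdist E c2 x.1 x.2 := hp ▸ (wdist_le_weight p').trans hp'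
      exact div_le_of_le_mul₀ (by positivity) (by positivity) (by exact_mod_cast this)
    · -- `wdist E = 0` here, and the ratio is the junk value `x / 0 = 0`
      simp [wdist_eq_zero_of_not_reachable hr]
  · positivity

lemma div_wdist_le_f2 [Fintype V] (huv : u ≠ v) :
    (wdist S c2 u v : ℚ) / wdist E c2 u v ≤ f2 E S c2 := by
  unfold f2
  split_ifs with h
  · refine Finset.le_sup' (f := fun p : V × V => (wdist S c2 p.1 p.2 : ℚ) / wdist E c2 p.1 p.2)
      (b := (u, v)) ?_
    simpa using huv
  · exact absurd ⟨(u, v), by simpa using huv⟩ h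

end WalkWeight

variable {n : ℕ}

lemma mem_EG_cases (h : 0 < n) {e : Sym2 (Vtx n)} (he : e ∈ EG n) :
    (∃ i, e = s(vG n i, wG n i) ∨ e = s(vG n i, pG n i) ∨ e = s(pG n i, wG n i)) ∨
    (∃ i j : Fin n, (j : ℕ) = i + 1 ∧ e = s(wG n i, vG n j)) ∨
    e = s(sG n h, tG n h) := by
  induction e using Sym2.ind with | _ a b => ?_
  obtain ⟨i, x⟩ := a
  obtain ⟨j, y⟩ := b
  simp only [EG, Set.mem_ofPred_eq, c2G, Sym2.lift_mk, wtG] at he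
  fin_cases x <;> fin_cases y <;> simp [vG, wG, pG, sG, tG] at he ⊢ <;>
    split_ifs at he <;> simp_all [Fin.ext_iff]

lemma c2G_vw (i : Fin n) : c2G n s(vG n i, wG n i) = 2 ^ ((i : ℕ) + 1) := by
  simp [c2G, wtG, vG, wG]

lemma c1G_vw (i : Fin n) : c1G n s(vG n i, wG n i) = 2 ^ ((i : ℕ) + 1) := by
  simp [c1G, wtG, vG, wG]

lemma c2G_vp (i : Fin n) : c2G n s(vG n i, pG n i) = 2 ^ ((i : ℕ) + 1) := by
  simp [c2G, wtG, vG, pG]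

lemma c1G_vp (i : Fin n) : c1G n s(vG n i, pG n i) = 0 := by
  simp [c1G, wtG, vG, pG]

lemma c2G_pw (i : Fin n) : c2G n s(pG n i, wG n i) = 2 ^ ((i : ℕ) + 1) := by
  simp [c2G, wtG, wG, pG]

lemma c1G_pw (i : Fin n) : c1G n s(pG n i, wG n i) = 0 := by
  simp [c1G, wtG, wG, pG]

lemma c2G_wv {i j : Fin n} (h : (j : ℕ) = i + 1) : c2G n s(wG n i, vG n j) = 1 := by
  have hji : j ≠ i := fun e => by simp [e] at h
  simp [c2G, wtG, wG, vG, h, hji]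

lemma c1G_wv {i j : Fin n} (h : (j : ℕ) = i + 1) : c1G n s(wG n i, vG n j) = 0 := by
  have hji : j ≠ i := fun e => by simp [e] at h
  simp [c1G, wtG, wG, vG, h, hji]

lemma c2G_st (hn : 2 ≤ n) : c2G n s(sG n (by omega), tG n (by omega)) = 1 := by
  have h : 0 ≠ n - 1 := by omega
  simp [c2G, wtG, sG, tG, h]

lemma c1G_st (hn : 2 ≤ n) : c1G n s(sG n (by omega), tG n (by omega)) = 2 ^ (n + 1) := by
  have h : 0 ≠ n - 1 := by omega
  simp [c1G, wtG, sG, tG, h]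

lemma c1G_nonneg (e : Sym2 (Vtx n)) : 0 ≤ c1G n e := by
  induction e using Sym2.ind with | _ a b => ?_
  simp only [c1G, Sym2.lift_mk, wtG]
  split_ifs <;> positivity

section Potential

variable (A : Finset (Fin n))

/- Lengths in `S_A`: `gadgetLen A i` is the `v_i`–`w_i` distance, `prefixLen A j` the
`s`–`v_j` distance and `stLen A` the `s`–`t` distance; `potential A` extends `prefixLen A` to
all vertices. -/
def gadgetLen (i : Fin n) : ℕ := if i ∈ A then 2 ^ ((i : ℕ) + 1) else 2 ^ ((i : ℕ) + 2)

def prefixLen (j : ℕ) : ℕ :=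
  ∑ i ∈ Finset.univ.filter (fun i : Fin n => (i : ℕ) < j), (gadgetLen A i + 1)

def directCost : ℕ := ∑ i ∈ A, 2 ^ ((i : ℕ) + 1)

def stLen : ℕ := ∑ i, gadgetLen A i + (n - 1)

def potential (u : Vtx n) : ℕ :=
  prefixLen A u.1 + if u.2 = 0 then 0 else if u.2 = 1 then 2 ^ ((u.1 : ℕ) + 1) else gadgetLen A u.1

variable {A}

lemma gadgetLen_bounds (i : Fin n) :
    2 ^ ((i : ℕ) + 1) ≤ gadgetLen A i ∧ gadgetLen A i ≤ 2 * 2 ^ ((i : ℕ) + 1) := by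
  unfold gadgetLen
  split_ifs <;> constructor <;> ring_nf <;> omega

lemma gadgetLen_le_stLen (i : Fin n) : gadgetLen A i ≤ stLen A :=
  (Finset.single_le_sum (fun _ _ => Nat.zero_le _) (Finset.mem_univ i)).trans (Nat.le_add_right _ _)

lemma stLen_pos (h : 0 < n) : 0 < stLen A :=
  (Nat.two_pow_pos _).trans_le ((gadgetLen_bounds ⟨0, h⟩).1.trans (gadgetLen_le_stLen _))

lemma prefixLen_zero : prefixLen A 0 = 0 := by
  simp [prefixLen]

lemma prefixLen_succ (i : Fin n) : prefixLen A (i + 1) = prefixLen A i + gadgetLen A i + 1 := by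
  have : Finset.univ.filter (fun k : Fin n => (k : ℕ) < i + 1)
      = insert i (Finset.univ.filter fun k : Fin n => (k : ℕ) < i) := by
    ext k
    simp only [Finset.mem_filter, Finset.mem_univ, true_and, Finset.mem_insert, Fin.ext_iff]
    omega
  rw [prefixLen, prefixLen, this, Finset.sum_insert (by simp)]
  ring

lemma potential_sG (h : 0 < n) : potential A (sG n h) = 0 := by
  simp [potential, sG, prefixLen_zero]

lemma potential_tG (h : 0 < n) : potential A (tG n h) = stLen A := by
  have hlast := prefixLen_succ (A := A) ⟨n - 1, Nat.sub_lt h one_pos⟩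
  have hall : prefixLen A n = ∑ i, gadgetLen A i + n := by
    rw [prefixLen, Finset.filter_true_of_mem (fun i _ => i.isLt), Finset.sum_add_distrib]
    simp
  dsimp only at hlast
  rw [Nat.sub_one_add_one h.ne', hall] at hlast
  simp only [potential, tG, Fin.isValue, Fin.reduceEq, ↓reduceIte, stLen]
  omega

variable (A) in
lemma directCost_add_stLen :
    directCost A + stLen A = ∑ i : Fin n, 2 ^ ((i : ℕ) + 2) + (n - 1) := by
  rw [directCost, stLen, ← add_assoc, ← Finset.univ_inter A, ← Finset.sum_ite_mem,
    ← Finset.sum_add_distrib]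
  congr 1
  refine Finset.sum_congr rfl fun i _ => ?_
  by_cases hi : i ∈ A
  · simp only [hi, ↓reduceIte, gadgetLen, Finset.univ_inter]
    ring
  · simp [gadgetLen, hi]

lemma potential_le_of_mem {F : Set (Sym2 (Vtx n))} (h : 0 < n) (hF : F ⊆ EG n)
    (hst : s(sG n h, tG n h) ∉ F) (hA : ∀ i, s(vG n i, wG n i) ∈ F → i ∈ A) (a b : Vtx n)
    (hab : s(a, b) ∈ F) : potential A b ≤ potential A a + c2G n s(a, b) := by
  suffices ∃ x y, s(a, b) = s(x, y) ∧ potential A x ≤ potential A y + c2G n s(x, y) ∧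
      potential A y ≤ potential A x + c2G n s(x, y) by
    obtain ⟨x, y, he, hxy, hyx⟩ := this
    rcases Sym2.eq_iff.1 he with ⟨rfl, rfl⟩ | ⟨rfl, rfl⟩
    · exact hyx
    · rwa [Sym2.eq_swap]
  rcases mem_EG_cases h (hF hab) with ⟨i, he | he | he⟩ | ⟨i, j, hij, he⟩ | he
  · have hi := hA i (he ▸ hab)
    refine ⟨_, _, he, ?_⟩
    rw [c2G_vw]
    simp [potential, vG, wG, gadgetLen, hi, add_assoc]
  · refine ⟨_, _, he, ?_⟩
    rw [c2G_vp]
    simp [potential, vG, pG, add_assoc]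
  · have := gadgetLen_bounds (A := A) i
    refine ⟨_, _, he, ?_⟩
    rw [c2G_pw]
    simp only [potential, pG, wG, Fin.isValue, one_ne_zero, Fin.reduceEq, ↓reduceIte,
      add_le_add_iff_right, le_add_iff_nonneg_right, zero_le, true_and]
    omega
  · have := prefixLen_succ (A := A) i
    refine ⟨_, _, he, ?_⟩
    rw [c2G_wv hij]
    simp only [potential, wG, vG, Fin.isValue, Fin.reduceEq, ↓reduceIte, hij, add_zero]
    omega
  · exact absurd (he ▸ hab) hst

end Potential

lemma directCost_eq_geomSum (A : Finset (Fin n)) :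
    directCost A = ∑ k ∈ A.map (Fin.valEmbedding.trans (addRightEmbedding 1)), 2 ^ k := by
  simp [directCost]

lemma directCost_injective : Function.Injective (directCost (n := n)) := by
  intro A B h
  rw [directCost_eq_geomSum, directCost_eq_geomSum] at h
  exact Finset.map_injective _ (Finset.geomSum_injective le_rfl h)

lemma directCost_lt (A : Finset (Fin n)) : directCost A < 2 ^ (n + 1) := by
  rw [directCost_eq_geomSum]
  exact Nat.geomSum_lt le_rfl (by simp)

lemma c2G_diag (a : Vtx n) : c2G n s(a, a) = 0 := by
  obtain ⟨i, x⟩ := a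
  fin_cases x <;> simp [c2G, wtG]

lemma edgeSet_Gn : (Gn n).edgeSet = EG n := by
  refine (edgeSet_fromEdgeSet _).trans (Disjoint.sdiff_eq_left (Set.disjoint_left.2 ?_))
  intro e he hdiag
  induction e using Sym2.ind with | _ a b => ?_
  obtain rfl : a = b := hdiag
  exact he (c2G_diag a)

lemma direct_injective : Function.Injective fun i : Fin n => s(vG n i, wG n i) := by
  intro i j h
  simpa [vG, wG] using h

def spannerOf (A : Finset (Fin n)) : Finset (Sym2 (Vtx n)) :=
  Finset.univ.filter (fun e => c2G n e ≠ 0 ∧ c1G n e = 0) ∪ A.image fun i => s(vG n i, wG n i)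

section Spanner

variable {A : Finset (Fin n)}

lemma mem_spannerOf_of_cost_eq_zero {e : Sym2 (Vtx n)} (h2 : c2G n e ≠ 0) (h1 : c1G n e = 0) :
    e ∈ spannerOf A :=
  Finset.mem_union_left _ (Finset.mem_filter.2 ⟨Finset.mem_univ _, h2, h1⟩)

lemma direct_mem_spannerOf {i : Fin n} (hi : i ∈ A) : s(vG n i, wG n i) ∈ spannerOf A :=
  Finset.mem_union_right _ (Finset.mem_image_of_mem _ hi)

lemma spannerOf_subset_EG : ↑(spannerOf A) ⊆ EG n := by
  intro e he
  rcases Finset.mem_union.1 he with he | he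
  · exact (Finset.mem_filter.1 he).2.1
  · obtain ⟨i, -, rfl⟩ := Finset.mem_image.1 he
    simp [EG, c2G_vw]

lemma adj_spannerOf {a b : Vtx n} (h : s(a, b) ∈ spannerOf A) :
    (fromEdgeSet (spannerOf A : Set (Sym2 (Vtx n)))).Adj a b :=
  (fromEdgeSet_adj _).2 ⟨h, fun hab => spannerOf_subset_EG h (hab ▸ c2G_diag a)⟩

lemma f1_spannerOf : f1 (c1G n) (spannerOf A) = directCost A := by
  have hdisj : Disjoint (Finset.univ.filter fun e => c2G n e ≠ 0 ∧ c1G n e = 0)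
      (A.image fun i => s(vG n i, wG n i)) := by
    refine Finset.disjoint_left.2 fun e he he' => ?_
    obtain ⟨i, -, rfl⟩ := Finset.mem_image.1 he'
    simp [c1G_vw] at he
  rw [f1, spannerOf, Finset.sum_union hdisj, Finset.sum_image direct_injective.injOn,
    Finset.sum_eq_zero fun e he => (Finset.mem_filter.1 he).2.2, directCost]
  simp [c1G_vw]

lemma exists_walk_vG_wG (i : Fin n) :
    ∃ p : (fromEdgeSet (spannerOf A : Set (Sym2 (Vtx n)))).Walk (vG n i) (wG n i),
      weight (c2G n) p = gadgetLen A i := by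
  by_cases hi : i ∈ A
  · refine ⟨(adj_spannerOf (direct_mem_spannerOf hi)).toWalk, ?_⟩
    simp [Adj.toWalk, c2G_vw, gadgetLen, hi]
  · have hvp := adj_spannerOf (A := A)
      (mem_spannerOf_of_cost_eq_zero (by simp [c2G_vp]) (c1G_vp i))
    have hpw := adj_spannerOf (A := A)
      (mem_spannerOf_of_cost_eq_zero (by simp [c2G_pw]) (c1G_pw i))
    refine ⟨Walk.cons hvp hpw.toWalk, ?_⟩
    simp only [Adj.toWalk, weight_cons, weight_nil, c2G_vp, c2G_pw, add_zero, gadgetLen, hi,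
      ↓reduceIte]
    ring

lemma exists_walk_sG_vG (h : 0 < n) (j : ℕ) (hj : j < n) :
    ∃ p : (fromEdgeSet (spannerOf A : Set (Sym2 (Vtx n)))).Walk (sG n h) (vG n ⟨j, hj⟩),
      weight (c2G n) p = prefixLen A j := by
  induction j with
  | zero => exact ⟨Walk.nil, prefixLen_zero.symm⟩
  | succ j ih =>
    obtain ⟨p, hp⟩ := ih (by omega)
    obtain ⟨q, hq⟩ := exists_walk_vG_wG (A := A) ⟨j, by omega⟩
    have hlink := adj_spannerOf (A := A)
      (mem_spannerOf_of_cost_eq_zero (by simp [c2G_wv])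
        (c1G_wv (i := ⟨j, by omega⟩) (j := ⟨j + 1, hj⟩) rfl))
    refine ⟨(p.append q).append hlink.toWalk, ?_⟩
    simp only [Adj.toWalk, weight_append, weight_cons, weight_nil, hp, hq, c2G_wv, add_zero]
    exact (prefixLen_succ (⟨j, by omega⟩ : Fin n)).symm

lemma exists_walk_sG_tG (h : 0 < n) :
    ∃ p : (fromEdgeSet (spannerOf A : Set (Sym2 (Vtx n)))).Walk (sG n h) (tG n h),
      weight (c2G n) p = stLen A := by
  obtain ⟨p, hp⟩ := exists_walk_sG_vG (A := A) h (n - 1) (by omega)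
  obtain ⟨q, hq⟩ : ∃ q : (fromEdgeSet (spannerOf A : Set (Sym2 (Vtx n)))).Walk _ (tG n h),
      weight (c2G n) q = gadgetLen A ⟨n - 1, by omega⟩ := exists_walk_vG_wG _
  refine ⟨p.append q, ?_⟩
  rw [weight_append, hp, hq, ← potential_tG h]
  simp [potential, tG]

lemma isSpanner_spannerOf (h : 0 < n) : IsSpanner (Gn n) ↑(spannerOf A) := by
  refine ⟨edgeSet_Gn ▸ spannerOf_subset_EG, (connected_iff_exists_forall_reachable _).2
    ⟨sG n h, ?_⟩⟩
  rintro ⟨⟨j, hj⟩, x⟩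
  obtain ⟨p, -⟩ := exists_walk_sG_vG (A := A) h j hj
  obtain ⟨q, -⟩ := exists_walk_vG_wG (A := A) ⟨j, hj⟩
  fin_cases x
  · exact ⟨p⟩
  · exact ⟨p.append (adj_spannerOf
      (mem_spannerOf_of_cost_eq_zero (by simp [c2G_vp]) (c1G_vp ⟨j, hj⟩))).toWalk⟩
  · exact ⟨p.append q⟩

end Spanner

lemma f2_spannerOf_le (h : 0 < n) (A : Finset (Fin n)) :
    f2 (Gn n).edgeSet ↑(spannerOf A) (c2G n) ≤ stLen A := by
  have hedge : ∀ {a b : Vtx n}, c2G n s(a, b) ≠ 0 → c1G n s(a, b) = 0 →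
      ∃ p : (fromEdgeSet (spannerOf A : Set (Sym2 (Vtx n)))).Walk a b,
        weight (c2G n) p ≤ stLen A * c2G n s(a, b) := fun h2 h1 =>
    ⟨(adj_spannerOf (mem_spannerOf_of_cost_eq_zero h2 h1)).toWalk, by
      simpa [Adj.toWalk] using Nat.le_mul_of_pos_left _ (stLen_pos h)⟩
  rw [edgeSet_Gn]
  refine f2_le_of_forall_edge _ fun e he => ?_
  rcases mem_EG_cases h he with ⟨i, rfl | rfl | rfl⟩ | ⟨i, j, hij, rfl⟩ | rfl
  · obtain ⟨p, hp⟩ := exists_walk_vG_wG (A := A) i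
    exact ⟨_, _, rfl, p, hp ▸ (gadgetLen_le_stLen i).trans (Nat.le_mul_of_pos_right _ he.bot_lt)⟩
  · exact ⟨_, _, rfl, hedge (by simp [c2G_vp]) (c1G_vp i)⟩
  · exact ⟨_, _, rfl, hedge (by simp [c2G_pw]) (c1G_pw i)⟩
  · exact ⟨_, _, rfl, hedge (by simp [c2G_wv hij]) (c1G_wv hij)⟩
  · obtain ⟨p, hp⟩ := exists_walk_sG_tG (A := A) h
    exact ⟨_, _, rfl, p, hp ▸ Nat.le_mul_of_pos_right _ he.bot_lt⟩

def directIndices (S : Finset (Sym2 (Vtx n))) : Finset (Fin n) :=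
  Finset.univ.filter fun i => s(vG n i, wG n i) ∈ S

lemma directCost_directIndices_le_f1 (S : Finset (Sym2 (Vtx n))) :
    (directCost (directIndices S) : ℤ) ≤ f1 (c1G n) S := by
  have hsub : (directIndices S).image (fun i => s(vG n i, wG n i)) ⊆ S := by
    intro e he
    obtain ⟨i, hi, rfl⟩ := Finset.mem_image.1 he
    exact (Finset.mem_filter.1 hi).2
  calc (directCost (directIndices S) : ℤ)
      = ∑ e ∈ (directIndices S).image (fun i => s(vG n i, wG n i)), c1G n e := by
        rw [Finset.sum_image direct_injective.injOn, directCost]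
        simp [c1G_vw]
    _ ≤ f1 (c1G n) S := Finset.sum_le_sum_of_subset_of_nonneg hsub fun e _ _ => c1G_nonneg e

lemma wdist_Gn_sG_tG (hn : 2 ≤ n) :
    wdist (Gn n).edgeSet (c2G n) (sG n (by omega)) (tG n (by omega)) = 1 := by
  have hadj : (fromEdgeSet (EG n)).Adj (sG n (by omega)) (tG n (by omega)) :=
    (fromEdgeSet_adj _).2 ⟨by simp [EG, c2G_st hn], by simp [sG, tG]⟩
  rw [edgeSet_Gn]
  refine le_antisymm ?_ (wdist_pos (fun _ he => he) hadj.reachable (by simp [sG, tG]))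
  simpa [Adj.toWalk, c2G_st hn] using wdist_le_weight (c2 := c2G n) hadj.toWalk

lemma stLen_directIndices_le_f2 (hn : 2 ≤ n) {S : Finset (Sym2 (Vtx n))}
    (hS : IsSpanner (Gn n) ↑S) (hst : s(sG n (by omega), tG n (by omega)) ∉ S) :
    (stLen (directIndices S) : ℚ) ≤ f2 (Gn n).edgeSet ↑S (c2G n) := by
  have hpot := le_add_wdist_of_potential (c2 := c2G n) (potential (directIndices S))
    (potential_le_of_mem (by omega) (edgeSet_Gn ▸ hS.1) hst
      fun i hi => Finset.mem_filter.2 ⟨Finset.mem_univ i, hi⟩)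
    (hS.2.preconnected (sG n (by omega)) (tG n (by omega)))
  rw [potential_sG, potential_tG, zero_add] at hpot
  calc (stLen (directIndices S) : ℚ)
      ≤ wdist (↑S) (c2G n) (sG n (by omega)) (tG n (by omega)) := by exact_mod_cast hpot
    _ = (wdist (↑S) (c2G n) (sG n (by omega)) (tG n (by omega)) : ℚ) /
          wdist (Gn n).edgeSet (c2G n) (sG n (by omega)) (tG n (by omega)) := by
        rw [wdist_Gn_sG_tG hn, Nat.cast_one, div_one]
    _ ≤ f2 (Gn n).edgeSet ↑S (c2G n) := div_wdist_le_f2 (by simp [sG, tG])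

lemma not_dominates_spannerOf (hn : 2 ≤ n) (A : Finset (Fin n)) {S : Finset (Sym2 (Vtx n))}
    (hS : IsSpanner (Gn n) ↑S) :
    ¬ Dominates (valueVec (Gn n) (c1G n) (c2G n) S)
      (valueVec (Gn n) (c1G n) (c2G n) (spannerOf A)) := by
  rintro ⟨⟨hf1, hf2⟩, hne⟩
  simp only [valueVec, f1_spannerOf, Int.cast_natCast] at hf1 hf2 hne
  rw [Ne, Prod.mk.injEq] at hne
  by_cases hst : s(sG n (by omega), tG n (by omega)) ∈ S
  · have hS1 : (2 ^ (n + 1) : ℤ) ≤ f1 (c1G n) S :=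
      c1G_st hn ▸ Finset.single_le_sum (fun e _ => c1G_nonneg e) hst
    have hA : (directCost A : ℤ) < 2 ^ (n + 1) := by exact_mod_cast directCost_lt A
    have hf1' : f1 (c1G n) S ≤ directCost A := by exact_mod_cast hf1
    linarith
  · have hB1 : (directCost (directIndices S) : ℚ) ≤ f1 (c1G n) S := by
      exact_mod_cast directCost_directIndices_le_f1 S
    have hB2 := stLen_directIndices_le_f2 hn hS hst
    have hA2 := f2_spannerOf_le (by omega) A
    have hK : (directCost A : ℚ) + stLen A =
        directCost (directIndices S) + stLen (directIndices S) := by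
      exact_mod_cast (directCost_add_stLen A).trans (directCost_add_stLen _).symm
    exact hne ⟨by linarith, by linarith⟩

/-- For `n ≥ 2`, the non-dominated set of the MSp instance
`(G_n, c1, c2)` has at least `2 ^ n` elements. -/
theorem YN_Gn_card_ge (n : ℕ) (hn : 2 ≤ n) :
    2 ^ n ≤ (YN (Gn n) (c1G n) (c2G n)).ncard := by
  set y := fun A : Finset (Fin n) => valueVec (Gn n) (c1G n) (c2G n) (spannerOf A)
  have hy : Function.Injective y := fun A B hAB => directCost_injective <| by
    simpa [y, valueVec, f1_spannerOf] using congrArg Prod.fst hAB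
  have hsub : Set.range y ⊆ YN (Gn n) (c1G n) (c2G n) := by
    rintro _ ⟨A, rfl⟩
    exact ⟨⟨_, isSpanner_spannerOf (by omega), rfl⟩, fun S hS => not_dominates_spannerOf hn A hS⟩
  have hfin : (YN (Gn n) (c1G n) (c2G n)).Finite :=
    (Set.finite_range fun S => valueVec (Gn n) (c1G n) (c2G n) S).subset
      fun _ ⟨⟨S, _, hS⟩, _⟩ => ⟨S, hS⟩
  calc 2 ^ n = (Set.range y).ncard := by
        rw [Set.ncard_range_of_injective hy, Nat.card_eq_fintype_card, Fintype.card_finset,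
          Fintype.card_fin]
    _ ≤ _ := Set.ncard_le_ncard hsub hfin

end MSpPaper
end
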